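/- Let α be a nonempty cyclically reduced word that is primitive (not equal to the n-fold concatenation of any word for any n ≥ 2). Let c₁ be a rotation of α and let c₂ be a rotation of the formal inverse α⁻¹, and suppose the concatenation c₁ ++ c₂ is a cyclically reduced word. Then c₁ ++ c₂ is primitive. -/

import Mathlib

/-- A word over `β` is reduced if it has no two adjacent letters `(x, b)`, `(x, ¬b)`. -/
def Reduced {β : Type*} (w : List (β × Bool)) : Prop :=
  List.Chain' (fun a b => ¬ (a.1 = b.1 ∧ b.2 = !a.2)) w

/-- A word is cyclically reduced if it is reduced and, when nonempty, its last letter and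
first letter are not of the form `(x, b)`, `(x, ¬b)`. -/
def CyclicallyReduced {β : Type*} (w : List (β × Bool)) : Prop :=
  Reduced w ∧ ∀ a ∈ w.getLast?, ∀ b ∈ w.head?, ¬ (a.1 = b.1 ∧ b.2 = !a.2)

/-- A list is primitive if it is not an `n`-fold concatenation of any list with `n ≥ 2`. -/
def Primitive {γ : Type*} (w : List γ) : Prop :=
  ¬ ∃ (u : List γ) (n : ℕ), 2 ≤ n ∧ w = (List.replicate n u).flatten
/-!
Since `c₂` is a rotation of `c₁⁻¹`, one can write `c₁ = x y` and `c₂ = x⁻¹ y⁻¹`, so `c₁ c₂` is the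
commutator word `x y x⁻¹ y⁻¹`. In its bi-infinite periodic extension `W`, pairing `x` with `x⁻¹`
and `y` with `y⁻¹` gives two reflections `i ↦ D - i` with `W i = (W (D - i))⁻¹`, one valid on
`[0, |x|)` and one on `[|x|, |x y|)`. If the word were `uⁿ` with `n ≥ 2`, then `W` would also have
period `|u|`, a divisor of `2 |x y|` of size at most `|x y|`; reducing modulo `|u|`, one of the two
reflections then holds on a whole period, hence everywhere. A reduced bi-infinite word has no such
reflection: at its centre it would either invert a letter in place or put a letter next to its
inverse.
-/

open Function Set FreeGroup

section

variable {β : Type*}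

def invLetter (a : β × Bool) : β × Bool := (a.1, !a.2)

@[simp] theorem invLetter_invLetter (a : β × Bool) : invLetter (invLetter a) = a := by
  simp [invLetter]

theorem invLetter_ne_self (a : β × Bool) : invLetter a ≠ a := by
  simp [invLetter, Prod.ext_iff]

theorem Reduced.getElem_succ_ne {w : List (β × Bool)} (hw : Reduced w) {i : ℕ}
    (hi : i + 1 < w.length) : w[i + 1] ≠ invLetter w[i] := by
  have := List.isChain_iff_getElem.mp hw i hi
  simp only [invLetter, ne_eq, Prod.ext_iff]
  tauto

theorem FreeGroup.getElem_invRev (z : List (β × Bool)) (i : ℕ) (hi : i < (invRev z).length) :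
    (invRev z)[i] = invLetter (z[z.length - 1 - i]'(by simp at hi; omega)) := by
  simp [invRev, List.getElem_reverse, invLetter]

theorem List.getElem_flatten_replicate {α : Type*} (u : List α) (n j : ℕ)
    (hj : j < (List.replicate n u).flatten.length) :
    (List.replicate n u).flatten[j] = u[j % u.length]'(Nat.mod_lt _ (by
      rcases u with _ | _ <;> simp_all)) := by
  induction n generalizing j with
  | zero => simp at hj
  | succ n ih =>
    simp only [List.replicate_succ, List.flatten_cons, List.getElem_append]
    split_ifs with h
    · simp [Nat.mod_eq_of_lt h]
    · rw [ih]; simp [Nat.mod_eq_sub_mod (not_lt.mp h)]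

theorem Function.Periodic.forall_of_forall_mem_Ico {α : Type*} [AddCommGroup α] [LinearOrder α]
    [IsOrderedAddMonoid α] [Archimedean α] {p : α → Prop} {c : α} (hp : Periodic p c)
    (hc : 0 < c) (a : α) (h : ∀ x ∈ Ico a (a + c), p x) (x : α) : p x := by
  obtain ⟨y, hy, hxy⟩ := hp.exists_mem_Ico hc x a
  exact hxy ▸ h y hy

theorem List.IsRotated.exists_append {α : Type*} {l l' : List α} (h : l ~r l') :
    ∃ p q, l = p ++ q ∧ l' = q ++ p := by
  obtain ⟨n, rfl⟩ := h
  exact ⟨_, _, (List.take_append_drop (n % l.length) l).symm,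
    List.rotate_eq_drop_append_take_mod⟩

section Reflection

variable {W : ℤ → β × Bool} {m : ℤ}

theorem Function.Periodic.reflection (hW : Periodic W m) (D : ℤ) :
    Periodic (fun i ↦ W i = invLetter (W (D - i))) m := by
  intro i
  simp only [hW i, show D - (i + m) = D - i - m by ring, hW.sub_eq]

theorem not_forall_reflection (hW : ∀ i, W (i + 1) ≠ invLetter (W i)) (D : ℤ) :
    ¬ ∀ i, W i = invLetter (W (D - i)) := by
  intro h
  obtain ⟨e, rfl | rfl⟩ := Int.even_or_odd' D
  · exact invLetter_ne_self _ (by simpa [two_mul] using (h e).symm)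
  · have := congrArg invLetter (h e)
    exact hW e (by simpa [two_mul, add_assoc, add_sub_right_comm] using this.symm)

theorem not_periodic_of_reflections (hW : ∀ i, W (i + 1) ≠ invLetter (W i)) {L d : ℤ}
    (hA : ∀ i ∈ Ico 0 d, W i = invLetter (W (L + d - 1 - i)))
    (hB : ∀ i ∈ Ico d L, W i = invLetter (W (2 * L + d - 1 - i)))
    (hm : 0 < m) (hmL : m ≤ L) (hdvd : m ∣ 2 * L) : ¬ Periodic W m := by
  intro hper
  have hmul : ∀ k, m ∣ k → Periodic W k := by
    rintro _ ⟨t, rfl⟩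
    simpa [mul_comm] using hper.int_mul t
  have window : ∀ D a, ¬ ∀ i ∈ Ico a (a + m), W i = invLetter (W (D - i)) := fun D a h ↦
    not_forall_reflection hW D ((hper.reflection D).forall_of_forall_mem_Ico hm a h)
  set r := L % m with hr
  have hdvd_Lr : m ∣ L - r := ⟨L / m, by rw [hr, Int.emod_def]; ring⟩
  have hLr : Periodic W (L - r) := hmul _ hdvd_Lr
  rcases eq_or_ne r 0 with hr0 | hr0
  · -- `L` is a period, so both relations are the reflection about `d - 1`
    refine window (d - 1) 0 fun i ⟨hi₀, him⟩ ↦ ?_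
    rcases lt_or_ge i d with hid | hid
    · rw [hA i ⟨hi₀, hid⟩, show L + d - 1 - i = d - 1 - i + (L - r) by rw [hr0]; ring, hLr]
    · rw [hB i ⟨hid, by omega⟩, show 2 * L + d - 1 - i = d - 1 - i + 2 * L by ring,
        hmul _ hdvd]
  have hr_pos : 0 < r := lt_of_le_of_ne (Int.emod_nonneg _ hm.ne') (Ne.symm hr0)
  have hrm : r < m := Int.emod_lt_of_pos _ hm
  have h2r : m ≤ 2 * r := Int.le_of_dvd (by omega) (by
    have : 2 * r = 2 * L - 2 * (L - r) := by ring
    rw [this]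
    exact dvd_sub hdvd (dvd_mul_of_dvd_right hdvd_Lr 2))
  have hmLr : m ≤ L - r := Int.le_of_dvd (by omega) hdvd_Lr
  rcases le_or_gt r d with hrd | hdr
  · refine window (L + d - 1) 0 fun i ⟨hi₀, him⟩ ↦ ?_
    rcases lt_or_ge i d with hid | hid
    · exact hA i ⟨hi₀, hid⟩
    · -- `r + d - 1 - i ∈ [0, d)` is the mirror image of `i` modulo the period `L - r`
      have hj := hA (r + d - 1 - i) ⟨by omega, by omega⟩
      rw [show L + d - 1 - (r + d - 1 - i) = i + (L - r) by ring, hLr] at hj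
      rw [show L + d - 1 - i = r + d - 1 - i + (L - r) by ring, hLr, hj, invLetter_invLetter]
  · -- here `[d, L)` contains a whole period
    exact window (2 * L + d - 1) d fun i ⟨hdi, him⟩ ↦ hB i ⟨hdi, by omega⟩

end Reflection

def List.cyclicExt {α : Type*} (u : List α) (hu : u ≠ []) (i : ℤ) : α :=
  u[(i % u.length).toNat]'(by
    have := List.length_pos_iff.mpr hu
    have := Int.emod_lt_of_pos i (by exact_mod_cast this : (0 : ℤ) < u.length)
    omega)

theorem List.periodic_cyclicExt {α : Type*} (u : List α) (hu : u ≠ []) :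
    Periodic (u.cyclicExt hu) u.length := by
  intro i
  simp [List.cyclicExt]

theorem List.cyclicExt_natCast {α : Type*} (u : List α) (hu : u ≠ []) (j : ℕ) :
    u.cyclicExt hu j = u[j % u.length]'(Nat.mod_lt _ (List.length_pos_iff.mpr hu)) := by
  simp only [List.cyclicExt]
  congr 1

theorem Reduced.ne_invLetter_of_periodic {w : List (β × Bool)} (hred : Reduced w)
    {W : ℤ → β × Bool} {m : ℤ} (hW : Periodic W m) (hm : 0 < m) (hmw : m < w.length)
    (hwW : ∀ (j : ℕ) (hj : j < w.length), w[j] = W j) (i : ℤ) :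
    W (i + 1) ≠ invLetter (W i) := by
  have hper : Periodic (fun i ↦ W (i + 1) ≠ invLetter (W i)) m := fun i ↦ by
    simp only [add_right_comm i m 1, hW (i + 1), hW i]
  refine hper.forall_of_forall_mem_Ico hm 0 (fun i ⟨hi₀, him⟩ ↦ ?_) i
  lift i to ℕ using hi₀
  have := hred.getElem_succ_ne (i := i) (by omega)
  rwa [hwW, hwW] at this

theorem getElem_append_invRev_append_of_lt {x y : List (β × Bool)} {i : ℕ} (hi : i < x.length) :
    (x ++ y ++ invRev x ++ invRev y)[i]'(by simp; omega) = invLetter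
      ((x ++ y ++ invRev x ++ invRev y)[2 * x.length + y.length - 1 - i]'(by simp; omega)) := by
  simp only [List.getElem_append, getElem_invRev, List.length_append, invRev_length]
  split_ifs <;> first | omega | (simp; congr 1; omega)

theorem getElem_append_invRev_append_of_le {x y : List (β × Bool)} {i : ℕ} (hi : x.length ≤ i)
    (hi' : i < x.length + y.length) :
    (x ++ y ++ invRev x ++ invRev y)[i]'(by simp; omega) = invLetter
      ((x ++ y ++ invRev x ++ invRev y)[3 * x.length + 2 * y.length - 1 - i]'(by simp; omega)) := by
  simp only [List.getElem_append, getElem_invRev, List.length_append, invRev_length]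
  split_ifs <;> first | omega | (simp; congr 1; omega)

theorem primitive_append_invRev_append {x y : List (β × Bool)} (hxy : x ++ y ≠ [])
    (hred : Reduced (x ++ y ++ invRev x ++ invRev y)) :
    Primitive (x ++ y ++ invRev x ++ invRev y) := by
  rintro ⟨u, n, hn, hw⟩
  set w := x ++ y ++ invRev x ++ invRev y
  have hwlen : w.length = 2 * (x.length + y.length) := by
    simp only [w, List.length_append, invRev_length]; ring
  have hlen : w.length = n * u.length := by rw [hw]; simp
  have hL : 0 < x.length + y.length := by simpa using List.length_pos_iff.mpr hxy
  have hu : u ≠ [] := by rintro rfl; rw [List.length_nil, mul_zero] at hlen; omega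
  have hm : (0 : ℤ) < u.length := by simp [List.length_pos_iff.mpr hu]
  have hmw : 2 * u.length ≤ w.length := hlen ▸ Nat.mul_le_mul_right _ hn
  have hper := List.periodic_cyclicExt u hu
  have hwW : ∀ (j : ℕ) (hj : j < w.length), w[j] = u.cyclicExt hu j := fun j hj ↦ by
    rw [List.cyclicExt_natCast, List.getElem_of_eq hw hj, List.getElem_flatten_replicate]
  refine not_periodic_of_reflections (hred.ne_invLetter_of_periodic hper hm (by omega) hwW)
    (L := x.length + y.length) (d := x.length) ?_ ?_ hm (by omega)
    ⟨n, by exact_mod_cast (hwlen.symm.trans hlen).trans (mul_comm _ _)⟩ hper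
  · rintro i ⟨hi₀, hid⟩
    lift i to ℕ using hi₀
    rw [show (x.length + y.length : ℤ) + x.length - 1 - i
        = ((2 * x.length + y.length - 1 - i : ℕ) : ℤ) by omega,
      ← hwW _ (by omega), ← hwW _ (by omega), getElem_append_invRev_append_of_lt (by omega)]
  · rintro i ⟨hdi, hiL⟩
    lift i to ℕ using (by omega)
    rw [show 2 * (x.length + y.length : ℤ) + x.length - 1 - i
        = ((3 * x.length + 2 * y.length - 1 - i : ℕ) : ℤ) by omega,
      ← hwW _ (by omega), ← hwW _ (by omega),
      getElem_append_invRev_append_of_le (by omega) (by omega)]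

theorem exists_eq_append_invRev_append {a c₁ c₂ : List (β × Bool)}
    (hc₁ : ∃ r s, a = r ++ s ∧ c₁ = s ++ r) (hc₂ : ∃ r s, invRev a = r ++ s ∧ c₂ = s ++ r) :
    ∃ x y, c₁ = x ++ y ∧ c₂ = invRev x ++ invRev y := by
  obtain ⟨r₁, s₁, rfl, rfl⟩ := hc₁
  obtain ⟨r₂, s₂, ha, hc₂⟩ := hc₂
  have hrot : invRev (s₁ ++ r₁) ~r c₂ := by
    rw [hc₂, invRev_append]
    refine List.isRotated_append.trans ?_
    rw [← invRev_append, ha]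
    exact List.isRotated_append
  obtain ⟨p, q, hpq, rfl⟩ := hrot.exists_append
  exact ⟨invRev q, invRev p, by rw [← invRev_invRev (L₁ := s₁ ++ r₁), hpq, invRev_append],
    by rw [invRev_invRev, invRev_invRev]⟩

end

theorem rotation_concat_rotation_inv_primitive_general {β : Type*} (a c₁ c₂ : List (β × Bool))
    (hane : a ≠ [])
    (hc₁ : ∃ r s, a = r ++ s ∧ c₁ = s ++ r)
    (hc₂ : ∃ r s, FreeGroup.invRev a = r ++ s ∧ c₂ = s ++ r)
    (hcr : CyclicallyReduced (c₁ ++ c₂)) :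
    Primitive (c₁ ++ c₂) := by
  have hc₁_ne : c₁ ≠ [] := by
    obtain ⟨r, s, rfl, rfl⟩ := hc₁
    simpa [and_comm] using hane
  obtain ⟨x, y, rfl, rfl⟩ := exists_eq_append_invRev_append hc₁ hc₂
  simpa only [List.append_assoc] using
    primitive_append_invRev_append hc₁_ne (by simpa only [List.append_assoc] using hcr.1)

/-- If `a` is a nonempty primitive cyclically reduced word, `c₁` is a rotation of `a`,
`c₂` is a rotation of the formal inverse `a⁻¹`, and `c₁ ++ c₂` is cyclically reduced,
then `c₁ ++ c₂` is primitive. -/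
theorem rotation_concat_rotation_inv_primitive {β : Type*} (a c₁ c₂ : List (β × Bool))
    (ha : CyclicallyReduced a) (hane : a ≠ []) (hprim : Primitive a)
    (hc₁ : ∃ r s, a = r ++ s ∧ c₁ = s ++ r)
    (hc₂ : ∃ r s, FreeGroup.invRev a = r ++ s ∧ c₂ = s ++ r)
    (hcr : CyclicallyReduced (c₁ ++ c₂)) :
    Primitive (c₁ ++ c₂) :=
  rotation_concat_rotation_inv_primitive_general a c₁ c₂ hane hc₁ hc₂ hcr
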